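/- arXiv:1209.3236 — 3 statements merged into one kernel-verified Lean document; each statement's English description precedes it below -/
import Mathlib

section
/- Let G be a connected finite simple graph and let k be an integer with χ(G) ≤ k ≤ Σ(G), where χ(G) is the chromatic number and Σ(G) is the folding number of G. Then there is a folding of G onto the complete graph K_k. -/
/-!
Follow a folding of `G` onto `K_s`, `s = Σ(G) ≥ k`. A simple fold raises the chromatic number by
at most one, so we may keep folding as long as `G` is `(k - 1)`-colorable. Once `χ(G) = k`, the
graph is not complete (the next fold has a pair at distance two), and an optimal coloring can be
chosen with two vertices of the same color at distance two. Folding them keeps the chromatic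
number equal to `k`, and repeating this ends in `K_k`.
-/

/-- A simple fold of `G` onto `H` via the identification map `f`:
two vertices `x ≠ y` at distance exactly two are identified, all other
vertices are kept distinct, and `H` is the resulting quotient graph. -/
def IsSimpleFold {V W : Type} (G : SimpleGraph V) (H : SimpleGraph W) (f : V → W) : Prop :=
  Function.Surjective f ∧
  (∃ x y : V, x ≠ y ∧ G.dist x y = 2 ∧ f x = f y ∧
    ∀ u v : V, u ≠ v → f u = f v → (u = x ∧ v = y) ∨ (u = y ∧ v = x)) ∧
  ∀ a b : W, H.Adj a b ↔ ∃ u v : V, G.Adj u v ∧ f u = a ∧ f v = b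

/-- `IsFolding G H f` : `H` is obtained from `G` by a (possibly empty)
sequence of simple folds whose composite identification map is `f`. -/
inductive IsFolding : ∀ {V W : Type}, SimpleGraph V → SimpleGraph W → (V → W) → Prop
  | refl {V : Type} (G : SimpleGraph V) : IsFolding G G id
  | step {V W U : Type} {G : SimpleGraph V} {H : SimpleGraph W} {K : SimpleGraph U}
      {f : V → W} {g : W → U} :
      IsSimpleFold G H f → IsFolding H K g → IsFolding G K (g ∘ f)

/-- `G` folds onto `H`. -/
def FoldsOnto {V W : Type} (G : SimpleGraph V) (H : SimpleGraph W) : Prop :=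
  ∃ f : V → W, IsFolding G H f

/-- The folding number `Σ(G)`: the largest `s` such that `G` folds onto `K_s`. -/
noncomputable def foldingNumber {V : Type} (G : SimpleGraph V) : ℕ :=
  sSup {s : ℕ | FoldsOnto G (SimpleGraph.completeGraph (Fin s))}

/-- A complete coloring of `G` with exactly `s` colors. -/
def IsCompleteColoring {V : Type} (G : SimpleGraph V) {s : ℕ} (c : V → Fin s) : Prop :=
  (∀ u v : V, G.Adj u v → c u ≠ c v) ∧
  Function.Surjective c ∧
  ∀ a b : Fin s, a ≠ b → ∃ u v : V, G.Adj u v ∧ c u = a ∧ c v = b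

/-- The achromatic number `Ψ(G)`. -/
noncomputable def achromaticNumber {V : Type} (G : SimpleGraph V) : ℕ :=
  sSup {s : ℕ | ∃ c : V → Fin s, IsCompleteColoring G c}

open Function

namespace SimpleGraph

variable {V α : Type*} {G : SimpleGraph V}

lemma Adj.dist_le_two {a b : V} (hab : G.Adj a b) : G.dist a b ≤ 2 := by
  rw [dist_eq_one_iff_adj.2 hab]; omega

lemma dist_le_two_of_adj_of_adj {a b c : V} (hab : G.Adj a b) (hbc : G.Adj b c) :
    G.dist a c ≤ 2 := by
  simpa using G.dist_le (hab.toWalk.concat hbc)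

lemma dist_swap_le_two [DecidableEq V] {u w a b : V} (huw : G.Adj u w) (hab : G.Adj a b) :
    G.dist (Equiv.swap u w a) (Equiv.swap u w b) ≤ 2 := by
  have hba := hab.ne.symm
  rcases eq_or_ne a u with rfl | hau
  · rcases eq_or_ne b w with rfl | hbw
    · simpa using huw.symm.dist_le_two
    · simpa [Equiv.swap_apply_of_ne_of_ne hba hbw] using dist_le_two_of_adj_of_adj huw.symm hab
  rcases eq_or_ne a w with rfl | haw
  · rcases eq_or_ne b u with rfl | hbu
    · simpa using huw.dist_le_two
    · simpa [Equiv.swap_apply_of_ne_of_ne hbu hba] using dist_le_two_of_adj_of_adj huw hab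
  rw [Equiv.swap_apply_of_ne_of_ne hau haw]
  rcases eq_or_ne b u with rfl | hbu
  · simpa using dist_le_two_of_adj_of_adj hab huw
  rcases eq_or_ne b w with rfl | hbw
  · simpa using dist_le_two_of_adj_of_adj hab huw.symm
  simpa [Equiv.swap_apply_of_ne_of_ne hbu hbw] using hab.dist_le_two

lemma ne_of_dist_eq_two {u v : V} (h : G.dist u v = 2) : u ≠ v := by
  rintro rfl; simp at h

lemma not_adj_of_dist_eq_two {u v : V} (h : G.dist u v = 2) : ¬G.Adj u v := fun hadj => by
  simp [dist_eq_one_iff_adj.2 hadj] at h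

lemma Coloring.exists_apply_eq_of_not_adj (C : G.Coloring α) {x y : V} (hxy : x ≠ y)
    (hn : ¬G.Adj x y) : ∃ (c : G.Coloring α) (u v : V), u ≠ v ∧ c u = c v := by
  classical
  by_cases hC : Injective C
  · refine ⟨Coloring.mk (C ∘ update id y x) fun {a b} hab => hC.ne ?_, x, y, hxy,
      congrArg C (by simp [hxy] : update id y x x = update id y x y)⟩
    have := hab.ne
    simp only [update_apply, id]
    split_ifs <;> grind [Adj.symm]
  · obtain ⟨u, v, he, hne⟩ := not_injective_iff.1 hC
    exact ⟨C, u, v, hne, he⟩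

lemma Coloring.exists_comp_swap [DecidableEq V] (c : G.Coloring α)
    (hc : ∀ p q, p ≠ q → G.dist p q ≤ 2 → c p ≠ c q) {u w : V} (huw : G.Adj u w) :
    ∃ c' : G.Coloring α, ∀ t, c' t = c (Equiv.swap u w t) :=
  ⟨Coloring.mk _ fun hab => hc _ _ ((Equiv.injective _).ne hab.ne) (dist_swap_le_two huw hab),
    fun _ => rfl⟩

lemma Connected.pos_of_colorable (hG : G.Connected) {k : ℕ} (hk : G.Colorable k) : 0 < k :=
  Nat.pos_of_ne_zero fun h0 => (colorable_zero_iff.1 (h0 ▸ hk)).false hG.nonempty.some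

/-- Among all colorings, pick a monochromatic pair `u ≠ v` at minimal distance `d`. If `d ≥ 3`,
no two vertices at distance `≤ 2` share a color, so swapping the colors of `u` and its neighbor
`w` on a shortest `u`–`v` path stays proper and makes `w, v` a monochromatic pair at distance
`d - 1`. -/
theorem Connected.exists_coloring_dist_eq_two (hG : G.Connected) (C : G.Coloring α)
    (hnc : ∃ x y, x ≠ y ∧ ¬G.Adj x y) :
    ∃ (c : G.Coloring α) (x y : V), c x = c y ∧ G.dist x y = 2 := by
  classical
  have hex : ∃ d, ∃ (c : G.Coloring α) (u v : V), u ≠ v ∧ c u = c v ∧ G.dist u v = d := by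
    obtain ⟨x, y, hxy, hn⟩ := hnc
    obtain ⟨c, u, v, huv, he⟩ := C.exists_apply_eq_of_not_adj hxy hn
    exact ⟨_, c, u, v, huv, he, rfl⟩
  have hmin : ∀ (c : G.Coloring α) (u v : V), u ≠ v → c u = c v → Nat.find hex ≤ G.dist u v :=
    fun c u v huv he => Nat.find_min' hex ⟨c, u, v, huv, he, rfl⟩
  obtain ⟨c, u, v, huv, he, hd⟩ := Nat.find_spec hex
  have h2 : 2 ≤ Nat.find hex :=
    hd ▸ hG.one_lt_dist_of_ne_of_not_adj huv fun h => c.valid h he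
  rcases h2.eq_or_lt with h2 | h3
  · exact ⟨c, u, v, he, hd.trans h2.symm⟩
  exfalso
  obtain ⟨p, hp⟩ := hG.exists_walk_length_eq_dist u v
  cases p with
  | nil => exact absurd rfl huv
  | @cons _ w _ huw q =>
    have hc : ∀ p q, p ≠ q → G.dist p q ≤ 2 → c p ≠ c q := fun p q hpq hle he =>
      (hmin c p q hpq he).not_gt (hle.trans_lt h3)
    obtain ⟨c', hc'⟩ := c.exists_comp_swap hc huw
    have hvw : v ≠ w := by
      rintro rfl
      have := dist_eq_one_iff_adj.2 huw
      omega
    have hq : G.dist w v < Nat.find hex := by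
      have := G.dist_le q
      simp only [Walk.length_cons] at hp
      omega
    refine (hmin c' w v hvw.symm ?_).not_gt hq
    rw [hc', hc', Equiv.swap_apply_right, Equiv.swap_apply_of_ne_of_ne huv.symm hvw, he]

end SimpleGraph

namespace IsSimpleFold

open SimpleGraph

variable {V W U α : Type} {G : SimpleGraph V} {H : SimpleGraph W} {K : SimpleGraph U} {f : V → W}

def hom (h : IsSimpleFold G H f) : G →g H :=
  ⟨f, fun huv => (h.2.2 _ _).2 ⟨_, _, huv, rfl, rfl⟩⟩

lemma connected (h : IsSimpleFold G H f) (hG : G.Connected) : H.Connected :=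
  hG.map h.hom h.1

lemma card_lt [Finite V] (h : IsSimpleFold G H f) : Nat.card W < Nat.card V := by
  obtain ⟨hf, ⟨x, y, hxy, -, hfxy, -⟩, -⟩ := h
  have := Fintype.ofFinite V
  have : Finite W := Finite.of_surjective f hf
  have := Fintype.ofFinite W
  simpa [Nat.card_eq_fintype_card] using
    Fintype.card_lt_of_surjective_not_injective f hf fun hi => hxy (hi hfxy)

lemma apply_eq_apply_iff (h : IsSimpleFold G H f) {x y : V} (hxy : x ≠ y) (hf : f x = f y)
    {u v : V} : f u = f v ↔ u = v ∨ (u = x ∧ v = y) ∨ (u = y ∧ v = x) := by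
  refine ⟨fun he => or_iff_not_imp_left.2 fun huv => ?_, ?_⟩
  · obtain ⟨-, ⟨x', y', -, -, -, huniq⟩, -⟩ := h
    have := huniq x y hxy hf
    have := huniq u v huv he
    grind
  · rintro (rfl | ⟨rfl, rfl⟩ | ⟨rfl, rfl⟩) <;> simp [hf]

lemma nonempty_coloring (h : IsSimpleFold G H f) (c : G.Coloring α)
    (hc : ∀ u v, f u = f v → c u = c v) : Nonempty (H.Coloring α) := by
  refine ⟨Coloring.mk (c ∘ surjInv h.1) fun {a b} hab => ?_⟩
  obtain ⟨u, v, huv, rfl, rfl⟩ := (h.2.2 a b).1 hab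
  rw [comp_apply, comp_apply, hc _ u (surjInv_eq h.1 _), hc _ v (surjInv_eq h.1 _)]
  exact c.valid huv

/-- The identified vertex gets a new color; all other vertices of `H` have a single preimage. -/
lemma colorable_succ (h : IsSimpleFold G H f) {n : ℕ} (hG : G.Colorable n) :
    H.Colorable (n + 1) := by
  classical
  obtain ⟨C⟩ := hG
  obtain ⟨x, y, hxy, -, hfxy, -⟩ := h.2.1
  let c : G.Coloring (Fin (n + 1)) := Coloring.mk
    (fun v => if f v = f x then Fin.last n else (C v).castSucc) fun {u v} huv => by
      have hf : f u ≠ f v := (h.hom.map_adj huv).ne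
      split_ifs with hu hv hv
      · exact absurd (hu.trans hv.symm) hf
      · exact (Fin.castSucc_lt_last _).ne'
      · exact (Fin.castSucc_lt_last _).ne
      · exact (Fin.castSucc_injective _).ne (C.valid huv)
  refine h.nonempty_coloring c fun u v he => ?_
  by_cases hu : f u = f x
  · show ite _ _ _ = ite _ _ _
    rw [if_pos hu, if_pos (he ▸ hu)]
  · obtain rfl : u = v := by
      rcases (h.apply_eq_apply_iff hxy hfxy).1 he with huv | ⟨rfl, -⟩ | ⟨rfl, -⟩
      exacts [huv, absurd rfl hu, absurd hfxy.symm hu]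
    rfl

lemma comp_iso (h : IsSimpleFold G H f) (e : H ≃g K) : IsSimpleFold G K (e ∘ f) := by
  obtain ⟨hf, ⟨x, y, hxy, hd, hfxy, huniq⟩, hadj⟩ := h
  refine ⟨e.surjective.comp hf, ⟨x, y, hxy, hd, congrArg e hfxy,
    fun u v huv he => huniq u v huv (e.injective he)⟩, fun a b => ?_⟩
  rw [← e.apply_symm_apply a, ← e.apply_symm_apply b, e.map_adj_iff, hadj]
  simp only [comp_apply, e.injective.eq_iff]

end IsSimpleFold

section Folding

open SimpleGraph

variable {V W U : Type} {G : SimpleGraph V} {H : SimpleGraph W} {K : SimpleGraph U} {f : V → W}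

theorem exists_isSimpleFold_of_dist_eq_two {x y : V} (hd : G.dist x y = 2) :
    ∃ (H : SimpleGraph {z // z ≠ y}) (f : V → {z // z ≠ y}), IsSimpleFold G H f ∧ f x = f y := by
  classical
  have hxy := ne_of_dist_eq_two hd
  let f : V → {z // z ≠ y} := fun z => if h : z = y then ⟨x, hxy⟩ else ⟨z, h⟩
  have hfxy : f x = f y := by simp [f, hxy]
  have huniq : ∀ u v, u ≠ v → f u = f v → (u = x ∧ v = y) ∨ (u = y ∧ v = x) := by
    intro u v huv he
    simp only [f] at he
    split_ifs at he <;> simp_all [Subtype.ext_iff]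
  have hne : ∀ u v, G.Adj u v → f u ≠ f v := fun u v huv he => by
    rcases huniq u v huv.ne he with ⟨rfl, rfl⟩ | ⟨rfl, rfl⟩
    exacts [not_adj_of_dist_eq_two hd huv, not_adj_of_dist_eq_two hd huv.symm]
  refine ⟨fromRel fun a b => ∃ u v, G.Adj u v ∧ f u = a ∧ f v = b, f,
    ⟨fun w => ⟨w, by simp [f, w.2]⟩, ⟨x, y, hxy, hd, hfxy, huniq⟩, fun a b => ?_⟩, hfxy⟩
  rw [fromRel_adj]
  refine ⟨fun ⟨_, h⟩ => h.elim id fun ⟨u, v, huv, hu, hv⟩ => ⟨v, u, huv.symm, hv, hu⟩, ?_⟩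
  rintro ⟨u, v, huv, rfl, rfl⟩
  exact ⟨hne u v huv, .inl ⟨u, v, huv, rfl, rfl⟩⟩

theorem FoldsOnto.cons (h : IsSimpleFold G H f) (hH : FoldsOnto H K) : FoldsOnto G K :=
  let ⟨g, hg⟩ := hH
  ⟨g ∘ f, .step h hg⟩

theorem IsSimpleFold.foldsOnto (h : IsSimpleFold G H f) : FoldsOnto G H :=
  .cons h ⟨id, .refl H⟩

theorem IsFolding.surjective (h : IsFolding G H f) : Surjective f := by
  induction h with
  | refl => exact surjective_id
  | step h _ ih => exact ih.comp h.1

theorem foldsOnto_completeGraph_of_chromaticNumber_eq [Finite V] {k : ℕ} (hG : G.Connected)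
    (hk : G.chromaticNumber = k) (hnc : ∃ x y, x ≠ y ∧ ¬G.Adj x y) :
    FoldsOnto G (completeGraph (Fin k)) := by
  induction hn : Nat.card V using Nat.strong_induction_on generalizing V with
  | _ n ih =>
    obtain ⟨C⟩ := chromaticNumber_le_iff_colorable.1 hk.le
    obtain ⟨c, x, y, hcxy, hd⟩ := hG.exists_coloring_dist_eq_two C hnc
    obtain ⟨H, f, hf, hfxy⟩ := exists_isSimpleFold_of_dist_eq_two hd
    have hxy := ne_of_dist_eq_two hd
    have hHk : H.chromaticNumber = k := by
      refine le_antisymm (Colorable.chromaticNumber_le ?_) (hk ▸ chromaticNumber_mono_of_hom hf.hom)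
      refine hf.nonempty_coloring c fun u v he => ?_
      rcases (hf.apply_eq_apply_iff hxy hfxy).1 he with rfl | ⟨rfl, rfl⟩ | ⟨rfl, rfl⟩
      exacts [rfl, hcxy, hcxy.symm]
    by_cases hHnc : ∃ a b, a ≠ b ∧ ¬H.Adj a b
    · exact .cons hf (ih _ (hn ▸ hf.card_lt) (hf.connected hG) hHk hHnc rfl)
    · have hH : H = ⊤ := by
        ext a b
        push Not at hHnc
        exact ⟨Adj.ne, hHnc a b⟩
      subst hH
      rw [chromaticNumber_top_eq_enat_card, ENat.card_eq_coe_natCard, Nat.cast_inj] at hHk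
      exact (hf.comp_iso (Iso.completeGraph (Finite.equivFinOfCardEq hHk))).foldsOnto

/-- The hypothesis on `H` is exactly what the trivial folding of `H` needs. -/
theorem IsFolding.foldsOnto_completeGraph [Finite V] {k : ℕ} (h : IsFolding G H f)
    (hG : G.Connected) (hk : G.Colorable k)
    (hH : H.Colorable k → FoldsOnto H (completeGraph (Fin k))) :
    FoldsOnto G (completeGraph (Fin k)) := by
  revert ‹Finite V›
  induction h with
  | refl => exact hH hk
  | @step V W U G H K f g hf _ ih =>
    intro
    have : Finite W := Finite.of_surjective f hf.1
    obtain ⟨k, rfl⟩ : ∃ j, k = j + 1 := Nat.exists_eq_add_one.2 (hG.pos_of_colorable hk)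
    by_cases hk' : G.Colorable k
    · exact .cons hf (ih (hf.connected hG) (hf.colorable_succ hk') hH)
    · obtain ⟨x, y, hxy, hd, -⟩ := hf.2.1
      refine foldsOnto_completeGraph_of_chromaticNumber_eq hG
        (by exact_mod_cast chromaticNumber_eq_iff_colorable_not_colorable.2 ⟨hk, hk'⟩)
        ⟨x, y, hxy, not_adj_of_dist_eq_two hd⟩

theorem foldsOnto_completeGraph_foldingNumber [Finite V] (h : 0 < foldingNumber G) :
    FoldsOnto G (completeGraph (Fin (foldingNumber G))) := by
  refine Nat.sSup_mem (s := {s | FoldsOnto G (completeGraph (Fin s))}) ?_ ⟨Nat.card V, ?_⟩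
  · by_contra hne
    simp [foldingNumber, Set.not_nonempty_iff_eq_empty.1 hne] at h
  · rintro s ⟨f, hf⟩
    simpa using Nat.card_le_card_of_surjective f hf.surjective

end Folding

/-- Interpolation: a connected graph `G` folds onto `K_k` for every `k` with
`χ(G) ≤ k ≤ Σ(G)`. -/
theorem foldsOnto_completeGraph_of_chromaticNumber_le_le {V : Type} [Fintype V]
    (G : SimpleGraph V) (hG : G.Connected) (k : ℕ)
    (h1 : G.chromaticNumber ≤ (k : ℕ∞)) (h2 : k ≤ foldingNumber G) :
    FoldsOnto G (SimpleGraph.completeGraph (Fin k)) := by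
  have hk := SimpleGraph.chromaticNumber_le_iff_colorable.1 h1
  obtain ⟨f, hf⟩ := foldsOnto_completeGraph_foldingNumber ((hG.pos_of_colorable hk).trans_le h2)
  refine hf.foldsOnto_completeGraph hG hk fun hK => ?_
  obtain rfl : foldingNumber G = k :=
    h2.antisymm' (by simpa using hK.card_le_of_pairwise_adj id fun _ _ => id)
  exact ⟨id, .refl _⟩
end

section
/- If the finite simple graph G is the join of two graphs G₁ and G₂, then the achromatic number of G equals the sum of the achromatic numbers of G₁ and G₂: Ψ(G) = Ψ(G₁) + Ψ(G₂). -/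
/-- The join of two graphs: all edges of `G₁`, all edges of `G₂`, and all edges
between the two vertex sets. -/
def graphJoin {V₁ V₂ : Type} (G₁ : SimpleGraph V₁) (G₂ : SimpleGraph V₂) :
    SimpleGraph (V₁ ⊕ V₂) where
  Adj a b :=
    (∃ u v, a = Sum.inl u ∧ b = Sum.inl v ∧ G₁.Adj u v) ∨
    (∃ u v, a = Sum.inr u ∧ b = Sum.inr v ∧ G₂.Adj u v) ∨
    (∃ u v, a = Sum.inl u ∧ b = Sum.inr v) ∨
    (∃ u v, a = Sum.inr u ∧ b = Sum.inl v)
  symm := ⟨by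
    rintro a b (⟨u, v, rfl, rfl, h⟩ | ⟨u, v, rfl, rfl, h⟩ | ⟨u, v, rfl, rfl⟩ | ⟨u, v, rfl, rfl⟩)
    · exact Or.inl ⟨v, u, rfl, rfl, h.symm⟩
    · exact Or.inr (Or.inl ⟨v, u, rfl, rfl, h.symm⟩)
    · exact Or.inr (Or.inr (Or.inr ⟨v, u, rfl, rfl⟩))
    · exact Or.inr (Or.inr (Or.inl ⟨v, u, rfl, rfl⟩))⟩
  loopless := ⟨by
    rintro a (⟨u, v, rfl, h2, h⟩ | ⟨u, v, rfl, h2, h⟩ | ⟨u, v, rfl, h2⟩ | ⟨u, v, rfl, h2⟩) <;>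
      simp_all⟩

/-! In a complete coloring of the join every vertex of `G₁` is adjacent to every vertex of `G₂`,
so the two sides use disjoint sets of colors. Restricted to either side the coloring stays
complete, since an edge realizing two colors of one side must lie inside that side; hence
`Ψ(G₁ + G₂) ≤ Ψ(G₁) + Ψ(G₂)`. Conversely, complete colorings of `G₁` and `G₂` with disjoint
palettes combine into a complete coloring of the join. -/

/-- `IsCompleteColoring` with an arbitrary type of colors in place of `Fin s`, so that color
classes can be split off and recombined without renumbering. -/
structure IsCompleteColorMap {V α : Type} (G : SimpleGraph V) (c : V → α) : Prop where
  proper : ∀ u v : V, G.Adj u v → c u ≠ c v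
  surjective : Function.Surjective c
  complete : ∀ a b : α, a ≠ b → ∃ u v : V, G.Adj u v ∧ c u = a ∧ c v = b

theorem isCompleteColoring_iff_isCompleteColorMap {V : Type} {G : SimpleGraph V} {s : ℕ}
    {c : V → Fin s} : IsCompleteColoring G c ↔ IsCompleteColorMap G c :=
  ⟨fun ⟨hp, hs, hc⟩ => ⟨hp, hs, hc⟩, fun ⟨hp, hs, hc⟩ => ⟨hp, hs, hc⟩⟩

namespace IsCompleteColorMap

variable {V W α β : Type} {G : SimpleGraph V} {c : V → α}

theorem comp_equiv (h : IsCompleteColorMap G c) (e : α ≃ β) :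
    IsCompleteColorMap G (e ∘ c) where
  proper u v huv := e.injective.ne (h.proper u v huv)
  surjective := e.surjective.comp h.surjective
  complete a b hab := by
    obtain ⟨u, v, huv, hu, hv⟩ := h.complete (e.symm a) (e.symm b) (e.symm.injective.ne hab)
    exact ⟨u, v, huv, by simp [hu], by simp [hv]⟩

theorem comap_rangeFactorization (h : IsCompleteColorMap G c) (f : W → V)
    (hf : ∀ v w, c v = c (f w) → v ∈ Set.range f) :
    IsCompleteColorMap (G.comap f) (Set.rangeFactorization (c ∘ f)) where
  proper x y hxy hc := h.proper (f x) (f y) hxy (congrArg Subtype.val hc)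
  surjective := Set.rangeFactorization_surjective
  complete := by
    rintro ⟨_, x, rfl⟩ ⟨_, y, rfl⟩ hxy
    obtain ⟨_, _, hadj, hu, hv⟩ := h.complete _ _ fun hc => hxy (Subtype.ext hc)
    obtain ⟨x', rfl⟩ := hf _ x hu
    obtain ⟨y', rfl⟩ := hf _ y hv
    exact ⟨x', y', hadj, Subtype.ext hu, Subtype.ext hv⟩

end IsCompleteColorMap

section Existence

variable {V : Type} {G : SimpleGraph V}

theorem exists_proper_surjective_of_no_edge_between {α : Type} {c : V → α}
    (hp : ∀ u v, G.Adj u v → c u ≠ c v) (hs : Function.Surjective c) {a b : α} (hab : a ≠ b)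
    (hno : ∀ u v, G.Adj u v → c u = a → c v ≠ b) :
    ∃ c' : V → {x // x ≠ b}, (∀ u v, G.Adj u v → c' u ≠ c' v) ∧ Function.Surjective c' := by
  classical
  refine ⟨fun v => if h : c v = b then ⟨a, hab⟩ else ⟨c v, h⟩, ?_, ?_⟩
  · intro u v huv heq
    have heq' := congrArg Subtype.val heq
    by_cases hu : c u = b <;> by_cases hv : c v = b <;>
      simp only [hu, hv, dite_true, dite_false] at heq'
    · exact hp u v huv (hu.trans hv.symm)
    · exact hno v u huv.symm heq'.symm hu
    · exact hno u v huv heq' hv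
    · exact hp u v huv heq'
  · rintro ⟨x, hx⟩
    obtain ⟨v, rfl⟩ := hs x
    exact ⟨v, by simp [hx]⟩

/-- Merging color classes with no edge between them terminates in a complete coloring. -/
theorem exists_isCompleteColorMap_of_proper {α : Type} [Finite α] {c : V → α}
    (hp : ∀ u v, G.Adj u v → c u ≠ c v) (hs : Function.Surjective c) :
    ∃ (β : Type) (_ : Finite β) (c' : V → β), IsCompleteColorMap G c' := by
  induction hn : Nat.card α using Nat.strong_induction_on generalizing α with
  | _ n ih =>
    by_cases hcomplete : ∀ a b : α, a ≠ b → ∃ u v, G.Adj u v ∧ c u = a ∧ c v = b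
    · exact ⟨α, inferInstance, c, hp, hs, hcomplete⟩
    · push Not at hcomplete
      obtain ⟨a, b, hab, hno⟩ := hcomplete
      obtain ⟨c', hp', hs'⟩ := exists_proper_surjective_of_no_edge_between hp hs hab hno
      exact ih _ (hn ▸ Finite.card_subtype_lt (not_not.mpr rfl)) hp' hs' rfl

theorem exists_isCompleteColoring [Finite V] :
    ∃ s, ∃ c : V → Fin s, IsCompleteColoring G c := by
  obtain ⟨β, _, c, hc⟩ := exists_isCompleteColorMap_of_proper (G := G) (c := id)
    (fun _ _ huv => G.ne_of_adj huv) Function.surjective_id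
  exact ⟨_, _, isCompleteColoring_iff_isCompleteColorMap.mpr
    (hc.comp_equiv (Finite.equivFin β))⟩

end Existence

section AchromaticNumber

variable {V : Type} [Finite V] {G : SimpleGraph V}

theorem bddAbove_setOf_isCompleteColoring :
    BddAbove {s : ℕ | ∃ c : V → Fin s, IsCompleteColoring G c} := by
  refine ⟨Nat.card V, ?_⟩
  rintro s ⟨c, -, hs, -⟩
  simpa using Nat.card_le_card_of_surjective c hs

theorem IsCompleteColorMap.card_le_achromaticNumber {α : Type} [Finite α] {c : V → α}
    (h : IsCompleteColorMap G c) : Nat.card α ≤ achromaticNumber G :=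
  le_csSup bddAbove_setOf_isCompleteColoring
    ⟨_, isCompleteColoring_iff_isCompleteColorMap.mpr (h.comp_equiv (Finite.equivFin α))⟩

theorem exists_isCompleteColoring_achromaticNumber :
    ∃ c : V → Fin (achromaticNumber G), IsCompleteColoring G c :=
  Nat.sSup_mem exists_isCompleteColoring bddAbove_setOf_isCompleteColoring

end AchromaticNumber

section GraphJoin

variable {V₁ V₂ α β : Type} {G₁ : SimpleGraph V₁} {G₂ : SimpleGraph V₂}

@[simp]
theorem graphJoin_adj_inl_inl {u v : V₁} :
    (graphJoin G₁ G₂).Adj (Sum.inl u) (Sum.inl v) ↔ G₁.Adj u v := by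
  simp [graphJoin]

@[simp]
theorem graphJoin_adj_inr_inr {u v : V₂} :
    (graphJoin G₁ G₂).Adj (Sum.inr u) (Sum.inr v) ↔ G₂.Adj u v := by
  simp [graphJoin]

@[simp]
theorem graphJoin_adj_inl_inr {u : V₁} {v : V₂} :
    (graphJoin G₁ G₂).Adj (Sum.inl u) (Sum.inr v) := by
  simp [graphJoin]

@[simp]
theorem graphJoin_adj_inr_inl {u : V₂} {v : V₁} :
    (graphJoin G₁ G₂).Adj (Sum.inr u) (Sum.inl v) := by
  simp [graphJoin]

theorem comap_inl_graphJoin : (graphJoin G₁ G₂).comap Sum.inl = G₁ := by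
  ext; simp

theorem comap_inr_graphJoin : (graphJoin G₁ G₂).comap Sum.inr = G₂ := by
  ext; simp

theorem IsCompleteColorMap.sumMap {c₁ : V₁ → α} {c₂ : V₂ → β}
    (h₁ : IsCompleteColorMap G₁ c₁) (h₂ : IsCompleteColorMap G₂ c₂) :
    IsCompleteColorMap (graphJoin G₁ G₂) (Sum.map c₁ c₂) where
  proper := by
    rintro (u | u) (v | v) huv
    · simpa using h₁.proper u v (by simpa using huv)
    · simp
    · simp
    · simpa using h₂.proper u v (by simpa using huv)
  surjective := h₁.surjective.sumMap h₂.surjective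
  complete := by
    rintro (a | a) (b | b) hab
    · obtain ⟨u, v, huv, rfl, rfl⟩ := h₁.complete a b (by simpa using hab)
      exact ⟨.inl u, .inl v, by simpa using huv, rfl, rfl⟩
    · obtain ⟨u, rfl⟩ := h₁.surjective a
      obtain ⟨v, rfl⟩ := h₂.surjective b
      exact ⟨.inl u, .inr v, graphJoin_adj_inl_inr, rfl, rfl⟩
    · obtain ⟨u, rfl⟩ := h₂.surjective a
      obtain ⟨v, rfl⟩ := h₁.surjective b
      exact ⟨.inr u, .inl v, graphJoin_adj_inr_inl, rfl, rfl⟩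
    · obtain ⟨u, v, huv, rfl, rfl⟩ := h₂.complete a b (by simpa using hab)
      exact ⟨.inr u, .inr v, by simpa using huv, rfl, rfl⟩

namespace IsCompleteColorMap

variable {c : V₁ ⊕ V₂ → α}

theorem disjoint_range_inl_range_inr (h : IsCompleteColorMap (graphJoin G₁ G₂) c) :
    Disjoint (Set.range (c ∘ Sum.inl)) (Set.range (c ∘ Sum.inr)) :=
  Set.disjoint_left.mpr fun _ ⟨_, hu⟩ ⟨_, hv⟩ =>
    h.proper _ _ graphJoin_adj_inl_inr (hu.trans hv.symm)

theorem comap_inl (h : IsCompleteColorMap (graphJoin G₁ G₂) c) :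
    IsCompleteColorMap G₁ (Set.rangeFactorization (c ∘ Sum.inl)) := by
  have h₁ := h.comap_rangeFactorization Sum.inl fun
    | .inl v, _, _ => ⟨v, rfl⟩
    | .inr _, w, hvw => (h.proper _ _ graphJoin_adj_inl_inr hvw.symm).elim
  rwa [comap_inl_graphJoin] at h₁

theorem comap_inr (h : IsCompleteColorMap (graphJoin G₁ G₂) c) :
    IsCompleteColorMap G₂ (Set.rangeFactorization (c ∘ Sum.inr)) := by
  have h₂ := h.comap_rangeFactorization Sum.inr fun
    | .inl _, w, hvw => (h.proper _ _ graphJoin_adj_inl_inr hvw).elim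
    | .inr v, _, _ => ⟨v, rfl⟩
  rwa [comap_inr_graphJoin] at h₂

theorem card_range_inl_add_card_range_inr [Finite α]
    (h : IsCompleteColorMap (graphJoin G₁ G₂) c) :
    Nat.card (Set.range (c ∘ Sum.inl)) + Nat.card (Set.range (c ∘ Sum.inr)) = Nat.card α := by
  rw [Nat.card_coe_set_eq, Nat.card_coe_set_eq,
    ← Set.ncard_union_eq h.disjoint_range_inl_range_inr, ← Set.Sum.elim_range,
    Sum.elim_comp_inl_inr, h.surjective.range_eq, Set.ncard_univ]

end IsCompleteColorMap

end GraphJoin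

section

variable {V₁ V₂ : Type} [Finite V₁] [Finite V₂] {G₁ : SimpleGraph V₁} {G₂ : SimpleGraph V₂}

theorem achromaticNumber_graphJoin_le :
    achromaticNumber (graphJoin G₁ G₂) ≤ achromaticNumber G₁ + achromaticNumber G₂ := by
  refine csSup_le' ?_
  rintro s ⟨c, hc⟩
  have h := isCompleteColoring_iff_isCompleteColorMap.mp hc
  calc s = Nat.card (Set.range (c ∘ Sum.inl)) + Nat.card (Set.range (c ∘ Sum.inr)) := by
        rw [h.card_range_inl_add_card_range_inr, Nat.card_fin]
    _ ≤ achromaticNumber G₁ + achromaticNumber G₂ :=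
        add_le_add h.comap_inl.card_le_achromaticNumber h.comap_inr.card_le_achromaticNumber

theorem le_achromaticNumber_graphJoin :
    achromaticNumber G₁ + achromaticNumber G₂ ≤ achromaticNumber (graphJoin G₁ G₂) := by
  obtain ⟨c₁, hc₁⟩ := exists_isCompleteColoring_achromaticNumber (G := G₁)
  obtain ⟨c₂, hc₂⟩ := exists_isCompleteColoring_achromaticNumber (G := G₂)
  have h := (isCompleteColoring_iff_isCompleteColorMap.mp hc₁).sumMap
    (isCompleteColoring_iff_isCompleteColorMap.mp hc₂)
  simpa using h.card_le_achromaticNumber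

end

/-- Harary–Hedetniemi: the achromatic number of a join is the sum of the
achromatic numbers: `Ψ(G₁ + G₂) = Ψ(G₁) + Ψ(G₂)`. -/
theorem achromaticNumber_graphJoin {V₁ V₂ : Type} [Fintype V₁] [Fintype V₂]
    (G₁ : SimpleGraph V₁) (G₂ : SimpleGraph V₂) :
    achromaticNumber (graphJoin G₁ G₂) = achromaticNumber G₁ + achromaticNumber G₂ :=
  achromaticNumber_graphJoin_le.antisymm le_achromaticNumber_graphJoin
end

section
/- Let n ≥ 3 and let Ψ be the achromatic number of the cycle Cₙ on n vertices. Then n ≥ Ψ(Ψ − 1)/2 if Ψ is odd, and n ≥ Ψ²/2 if Ψ is even. -/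
/-! Each colour class of a complete colouring with `s` colours must be adjacent to all `s - 1`
other classes, while a class of `k` vertices of a graph of maximum degree `Δ` has at most `Δ k`
neighbours. In a cycle `Δ ≤ 2`, so summing `s - 1 ≤ 2 k` over the classes gives `s (s - 1) ≤ 2 n`;
when `s` is even, `s - 1` is odd and the bound sharpens to `s ≤ 2 k`, giving `s² ≤ 2 n`. -/

open Finset SimpleGraph

lemma achromaticNumber_eq_zero_or_exists {V : Type} [Finite V] (G : SimpleGraph V) :
    achromaticNumber G = 0 ∨ ∃ c : V → Fin (achromaticNumber G), IsCompleteColoring G c := by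
  rw [achromaticNumber]
  set S := {s : ℕ | ∃ c : V → Fin s, IsCompleteColoring G c}
  rcases S.eq_empty_or_nonempty with hS | hS
  · left
    rw [hS, csSup_empty, Nat.bot_eq_zero]
  · have hbdd : BddAbove S := ⟨Nat.card V, fun s ⟨c, hc⟩ => by
      simpa using Nat.card_le_card_of_surjective c hc.2.1⟩
    exact Or.inr (Nat.sSup_mem hS hbdd)

lemma IsCompleteColoring.sub_one_le_maxDegree_mul_card_fiber {V : Type} [Fintype V]
    {G : SimpleGraph V} [DecidableRel G.Adj] {s : ℕ} {c : V → Fin s}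
    (hc : IsCompleteColoring G c) (a : Fin s) :
    s - 1 ≤ G.maxDegree * #{v | c v = a} := by
  classical
  have hcover :
      univ.erase a ⊆ (({v | c v = a} : Finset V).biUnion (G.neighborFinset ·)).image c := by
    intro b hb
    obtain ⟨u, v, huv, hu, hv⟩ := hc.2.2 a b (ne_of_mem_erase hb).symm
    exact mem_image.2 ⟨v, mem_biUnion.2 ⟨u, by simpa using hu, by simpa using huv⟩, hv⟩
  calc s - 1 = #(univ.erase a) := by simp
    _ ≤ #(({v | c v = a} : Finset V).biUnion (G.neighborFinset ·)) :=
        (card_le_card hcover).trans card_image_le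
    _ ≤ #{v | c v = a} * G.maxDegree :=
        card_biUnion_le_card_mul _ _ _ fun v _ => G.degree_le_maxDegree v
    _ = G.maxDegree * #{v | c v = a} := mul_comm _ _

lemma mul_le_mul_card_of_le_mul_card_fiber {V : Type} [Fintype V] {s : ℕ}
    (c : V → Fin s) {m d : ℕ} (h : ∀ a, m ≤ d * #{v | c v = a}) :
    s * m ≤ d * Fintype.card V :=
  calc s * m = ∑ _a : Fin s, m := by simp
    _ ≤ ∑ a : Fin s, d * #{v | c v = a} := sum_le_sum fun a _ => h a
    _ = d * Fintype.card V := by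
        rw [← mul_sum, ← card_eq_sum_card_fiberwise (by simp), card_univ]

lemma cycleGraph_degree_le_two {n : ℕ} (v : Fin n) : (cycleGraph n).degree v ≤ 2 := by
  match n, v with
  | 1, v => simp [cycleGraph_one_eq_bot]
  | n + 2, v => rw [cycleGraph_degree_two_le]; exact card_le_two

theorem cycle_achromatic_lower_bound_general (n : ℕ) (Ψ : ℕ)
    (hΨ : achromaticNumber (SimpleGraph.cycleGraph n) = Ψ) :
    (Odd Ψ → Ψ * (Ψ - 1) / 2 ≤ n) ∧ (Even Ψ → Ψ ^ 2 / 2 ≤ n) := by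
  obtain hzero | ⟨c, hc⟩ := hΨ ▸ achromaticNumber_eq_zero_or_exists (cycleGraph n)
  · subst hzero
    simp
  have hΔ : (cycleGraph n).maxDegree ≤ 2 :=
    maxDegree_le_of_forall_degree_le _ _ cycleGraph_degree_le_two
  have hclass (a : Fin Ψ) : Ψ - 1 ≤ 2 * #{v | c v = a} :=
    (hc.sub_one_le_maxDegree_mul_card_fiber a).trans (Nat.mul_le_mul_right _ hΔ)
  refine ⟨fun _ => Nat.div_le_of_le_mul ?_, fun heven => Nat.div_le_of_le_mul ?_⟩
  · simpa using mul_le_mul_card_of_le_mul_card_fiber c hclass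
  · have hclass_even (a : Fin Ψ) : Ψ ≤ 2 * #{v | c v = a} := by
      obtain ⟨k, hk⟩ := heven
      have := hclass a
      omega
    simpa [sq] using mul_le_mul_card_of_le_mul_card_fiber c hclass_even

/-- Marcu's bound: if `Ψ` is the achromatic number of the cycle `Cₙ` (`n ≥ 3`),
then `n ≥ Ψ(Ψ - 1)/2` when `Ψ` is odd and `n ≥ Ψ²/2` when `Ψ` is even. -/
theorem cycle_achromatic_lower_bound (n : ℕ) (hn : 3 ≤ n) (Ψ : ℕ)
    (hΨ : achromaticNumber (SimpleGraph.cycleGraph n) = Ψ) :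
    (Odd Ψ → Ψ * (Ψ - 1) / 2 ≤ n) ∧ (Even Ψ → Ψ ^ 2 / 2 ≤ n) :=
  cycle_achromatic_lower_bound_general n Ψ hΨ
end
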